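/- Cardinality factorization of the cycle space: for any E ⊆ E(𝓛) with Ē = E(𝓛) \ E, the cycle space of the full lattice factorizes as |𝒵| = |𝒮| · |𝒵(E)| · |𝒵(Ē)|, where 𝒮 = 𝒮(E) ∩ 𝒮(Ē) is the common syndrome space and 𝒵(E), 𝒵(Ē) are the cycle spaces on E and Ē respectively. -/

import Mathlib

open Finset

/-- Edges of the L×L square lattice: `horiz i j` is the edge from (i,j) to (i+1,j),
`vert i j` is the edge from (i,j) to (i,j+1). -/
inductive Edge (L : ℕ) where
  | horiz : Fin L → Fin (L+1) → Edge L
  | vert  : Fin (L+1) → Fin L → Edge L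
deriving DecidableEq, Fintype

/-- Vertices of the L×L square lattice. -/
abbrev Vertex (L : ℕ) := Fin (L+1) × Fin (L+1)

/-- The two endpoints of an edge. -/
def Edge.ends {L : ℕ} : Edge L → Vertex L × Vertex L
  | .horiz i j => ((i.castSucc, j), (i.succ, j))
  | .vert i j  => ((i, j.castSucc), (i, j.succ))

/-- A vertex is incident to an edge iff it is one of its endpoints. -/
def Incident {L : ℕ} (s : Vertex L) (e : Edge L) : Prop :=
  s = e.ends.1 ∨ s = e.ends.2

instance {L : ℕ} (s : Vertex L) (e : Edge L) : Decidable (Incident s e) := by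
  unfold Incident; infer_instance

/-- The star δs: the set of edges incident to a vertex s. -/
def star {L : ℕ} (s : Vertex L) : Finset (Edge L) :=
  Finset.univ.filter (fun e => Incident s e)

/-- The boundary ∂p of the plaquette p = (i,j): the four edges of the unit square
with corners (i,j), (i+1,j), (i,j+1), (i+1,j+1). -/
def pBoundary {L : ℕ} (p : Fin L × Fin L) : Finset (Edge L) :=
  {Edge.horiz p.1 p.2.castSucc, Edge.horiz p.1 p.2.succ,
   Edge.vert p.1.castSucc p.2, Edge.vert p.1.succ p.2}


/-- The boundary of a 1-chain x : E(𝓛) → ZMod 2 is the 0-chain ∂x with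
(∂x)_s = ∑_{e ∈ δs} x_e. -/
def bd {L : ℕ} (x : Edge L → ZMod 2) : Vertex L → ZMod 2 :=
  fun s => ∑ e ∈ star s, x e

/-- The restriction of a 1-chain to a subset E of edges, extended by zero. -/
def restrict {L : ℕ} (E : Finset (Edge L)) (x : Edge L → ZMod 2) : Edge L → ZMod 2 :=
  fun e => if e ∈ E then x e else 0

/-- ∂E: the set of vertices incident both to an edge of E and to an edge of the
complement Ē = E(𝓛) \ E. -/
def bdryV {L : ℕ} (E : Finset (Edge L)) : Finset (Vertex L) :=
  Finset.univ.filter (fun s => (∃ e ∈ E, Incident s e) ∧ (∃ e ∈ Eᶜ, Incident s e))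

/-- A relative 1-cycle on E with respect to a set B of vertices: a 1-chain supported on
E whose boundary vanishes outside B. `IsRelCycle E (bdryV E) x` says x ∈ 𝒵(E,∂E). -/
def IsRelCycle {L : ℕ} (E : Finset (Edge L)) (B : Finset (Vertex L))
    (x : Edge L → ZMod 2) : Prop :=
  (∀ e ∉ E, x e = 0) ∧ ∀ s ∉ B, bd x s = 0

/-- The syndrome space 𝒮(E): the set of boundaries of relative 1-cycles in 𝒵(E,∂E). -/
def syndromes {L : ℕ} (E : Finset (Edge L)) : Set (Vertex L → ZMod 2) :=
  {u | ∃ z : Edge L → ZMod 2, IsRelCycle E (bdryV E) z ∧ bd z = u}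

/-! Restricting a cycle `x` to `E` gives a relative cycle on `E`, and since `∂x = 0` in
characteristic 2, `∂(x|_E) = ∂(x|_Ē)`; so `x ↦ ∂(x|_E)` maps `𝒵` into `𝒮`. It is onto: a common
syndrome `∂y = ∂z` with `y` on `E` and `z` on `Ē` is the image of the cycle `y + z`. Its kernel
consists of the cycles whose two restrictions are cycles, i.e. it is `𝒵(E) × 𝒵(Ē)`, and
`|𝒵| = |ker| · |range|`. -/

theorem AddMonoidHom.card_eq_card_ker_mul_card_range {G H : Type*} [AddGroup G] [AddGroup H]
    (f : G →+ H) : Nat.card G = Nat.card f.ker * Nat.card f.range := by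
  rw [AddSubgroup.card_eq_card_quotient_mul_card_addSubgroup f.ker, mul_comm,
    Nat.card_congr (QuotientAddGroup.quotientKerEquivRange f).toEquiv]

variable {L : ℕ}

lemma mem_star {s : Vertex L} {e : Edge L} : e ∈ _root_.star s ↔ Incident s e := by
  simp [_root_.star]

lemma bd_add (x y : Edge L → ZMod 2) : bd (x + y) = bd x + bd y := by
  funext s
  simp [bd, sum_add_distrib]

lemma restrict_add (E : Finset (Edge L)) (x y : Edge L → ZMod 2) :
    _root_.restrict E (x + y) = _root_.restrict E x + _root_.restrict E y := by
  funext e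
  by_cases he : e ∈ E <;> simp [_root_.restrict, he]

lemma restrict_add_restrict_compl (E : Finset (Edge L)) (x : Edge L → ZMod 2) :
    _root_.restrict E x + _root_.restrict Eᶜ x = x := by
  funext e
  by_cases he : e ∈ E <;> simp [_root_.restrict, he]

lemma restrict_apply_of_notMem {E : Finset (Edge L)} (x : Edge L → ZMod 2) {e : Edge L}
    (he : e ∉ E) : _root_.restrict E x e = 0 := by
  simp [_root_.restrict, he]

lemma restrict_add_of_support {E : Finset (Edge L)} {y z : Edge L → ZMod 2}
    (hy : ∀ e ∉ E, y e = 0) (hz : ∀ e ∉ Eᶜ, z e = 0) : _root_.restrict E (y + z) = y := by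
  funext e
  by_cases he : e ∈ E
  · simp [_root_.restrict, he, hz e (notMem_compl.mpr he)]
  · simp [_root_.restrict, he, hy e he]

lemma restrict_compl_add_of_support {E : Finset (Edge L)} {y z : Edge L → ZMod 2}
    (hy : ∀ e ∉ E, y e = 0) (hz : ∀ e ∉ Eᶜ, z e = 0) : _root_.restrict Eᶜ (y + z) = z := by
  rw [add_comm]
  exact restrict_add_of_support hz (by simpa only [compl_compl] using hy)

lemma bd_restrict_compl {E : Finset (Edge L)} {x : Edge L → ZMod 2} (hx : bd x = 0) :
    bd (_root_.restrict Eᶜ x) = bd (_root_.restrict E x) := by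
  rw [eq_comm, ← CharTwo.add_eq_zero, ← bd_add, restrict_add_restrict_compl, hx]

lemma bd_restrict_of_star_subset {E : Finset (Edge L)} (x : Edge L → ZMod 2) {s : Vertex L}
    (hs : _root_.star s ⊆ E) : bd (_root_.restrict E x) s = bd x s :=
  sum_congr rfl fun e he => by simp [_root_.restrict, hs he]

lemma bd_restrict_of_disjoint_star {E : Finset (Edge L)} (x : Edge L → ZMod 2) {s : Vertex L}
    (hs : Disjoint (_root_.star s) E) : bd (_root_.restrict E x) s = 0 :=
  sum_eq_zero fun _ he => restrict_apply_of_notMem x (disjoint_left.mp hs he)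

lemma star_subset_or_disjoint_of_notMem_bdryV {E : Finset (Edge L)} {s : Vertex L}
    (hs : s ∉ bdryV E) : _root_.star s ⊆ E ∨ Disjoint (_root_.star s) E := by
  simp only [bdryV, mem_filter, mem_univ, true_and] at hs
  rcases not_and_or.mp hs with hE | hEc
  · push Not at hE
    exact .inr (disjoint_left.mpr fun e hs he => hE e he (mem_star.mp hs))
  · push Not at hEc
    exact .inl fun e hs => by_contra fun he => hEc e (mem_compl.mpr he) (mem_star.mp hs)

lemma isRelCycle_restrict (E : Finset (Edge L)) {x : Edge L → ZMod 2} (hx : bd x = 0) :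
    IsRelCycle E (bdryV E) (_root_.restrict E x) := by
  refine ⟨fun e he => restrict_apply_of_notMem x he, fun s hs => ?_⟩
  rcases star_subset_or_disjoint_of_notMem_bdryV hs with hsub | hdisj
  · rw [bd_restrict_of_star_subset x hsub, hx, Pi.zero_apply]
  · exact bd_restrict_of_disjoint_star x hdisj

variable (L) in
def bdHom : (Edge L → ZMod 2) →+ (Vertex L → ZMod 2) :=
  AddMonoidHom.mk' bd bd_add

def syndromeHom (E : Finset (Edge L)) : (bdHom L).ker →+ (Vertex L → ZMod 2) :=
  AddMonoidHom.mk' (fun x => bd (_root_.restrict E x)) fun x y => by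
    simp only [AddSubgroup.coe_add, restrict_add, bd_add]

lemma range_syndromeHom (E : Finset (Edge L)) :
    ((syndromeHom E).range : Set (Vertex L → ZMod 2)) = syndromes E ∩ syndromes Eᶜ := by
  ext u
  constructor
  · rintro ⟨⟨x, hx⟩, rfl⟩
    exact ⟨⟨_, isRelCycle_restrict E hx, rfl⟩,
      ⟨_, isRelCycle_restrict Eᶜ hx, bd_restrict_compl hx⟩⟩
  · rintro ⟨⟨y, hy, rfl⟩, ⟨z, hz, hzy⟩⟩
    have hcycle : bd (y + z) = 0 := by rw [bd_add, hzy, CharTwo.add_self_eq_zero]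
    exact ⟨⟨y + z, hcycle⟩, congrArg bd (restrict_add_of_support hy.1 hz.1)⟩

def kerSyndromeHomEquiv (E : Finset (Edge L)) : (syndromeHom E).ker ≃
    {y : Edge L → ZMod 2 // (∀ e ∉ E, y e = 0) ∧ bd y = 0} ×
      {z : Edge L → ZMod 2 // (∀ e ∉ Eᶜ, z e = 0) ∧ bd z = 0} where
  toFun x :=
    (⟨_root_.restrict E x, fun _ => restrict_apply_of_notMem _, x.2⟩,
      ⟨_root_.restrict Eᶜ x, fun _ => restrict_apply_of_notMem _,
        (bd_restrict_compl x.1.2).trans x.2⟩)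
  invFun p :=
    ⟨⟨p.1 + p.2, by simp only [AddMonoidHom.mem_ker, bdHom, AddMonoidHom.mk'_apply, bd_add,
        p.1.2.2, p.2.2.2, add_zero]⟩,
      by simp only [AddMonoidHom.mem_ker, syndromeHom, AddMonoidHom.mk'_apply,
        restrict_add_of_support p.1.2.1 p.2.2.1, p.1.2.2]⟩
  left_inv x := by
    ext1; ext1
    exact restrict_add_restrict_compl E x
  right_inv p := by
    ext1 <;> ext1
    · exact restrict_add_of_support p.1.2.1 p.2.2.1
    · exact restrict_compl_add_of_support p.1.2.1 p.2.2.1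

theorem cycle_space_cardinality_factorization_general (L : ℕ)
    (E : Finset (Edge L)) :
    Nat.card {x : Edge L → ZMod 2 // bd x = 0}
      = Nat.card (syndromes E ∩ syndromes Eᶜ : Set (Vertex L → ZMod 2)) *
        Nat.card {x : Edge L → ZMod 2 // (∀ e ∉ E, x e = 0) ∧ bd x = 0} *
        Nat.card {x : Edge L → ZMod 2 // (∀ e ∉ Eᶜ, x e = 0) ∧ bd x = 0} := by
  calc Nat.card {x : Edge L → ZMod 2 // bd x = 0}
      = Nat.card (bdHom L).ker := rfl
    _ = Nat.card (syndromeHom E).ker * Nat.card (syndromeHom E).range :=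
        (syndromeHom E).card_eq_card_ker_mul_card_range
    _ = _ := by
        rw [Nat.card_congr (kerSyndromeHomEquiv E), Nat.card_prod, ← SetLike.coe_sort_coe,
          range_syndromeHom]
        ring

/-- cardinality factorization of the cycle space: for any subset E of
edges, |𝒵| = |𝒮|·|𝒵(E)|·|𝒵(Ē)|, where 𝒮 = 𝒮(E) ∩ 𝒮(Ē) is the common syndrome space
and 𝒵(E), 𝒵(Ē) are the cycle spaces of 1-chains supported on E, Ē respectively. -/
theorem cycle_space_cardinality_factorization (L : ℕ) (hL : 1 ≤ L)
    (E : Finset (Edge L)) :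
    Nat.card {x : Edge L → ZMod 2 // bd x = 0}
      = Nat.card (syndromes E ∩ syndromes Eᶜ : Set (Vertex L → ZMod 2)) *
        Nat.card {x : Edge L → ZMod 2 // (∀ e ∉ E, x e = 0) ∧ bd x = 0} *
        Nat.card {x : Edge L → ZMod 2 // (∀ e ∉ Eᶜ, x e = 0) ∧ bd x = 0} :=
  cycle_space_cardinality_factorization_general L E
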